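/- arXiv:1902.01708 — 4 statements merged into one kernel-verified Lean document; each statement's English description precedes it below -/
import Mathlib

section
/- Let φ₁, φ₂ be symbols and t₁, t₂ > 0. The weighted translation operators S_{1,t₁} and S_{2,t₂} on L²(ℝ₊) commute, i.e. S_{1,t₁}S_{2,t₂} = S_{2,t₂}S_{1,t₁}, if and only if φ₁(x)φ₂(x−t₁) / (φ₁(x−t₁)φ₂(x−t₁−t₂)) = φ₂(x)φ₁(x−t₂) / (φ₂(x−t₂)φ₁(x−t₁−t₂)) for all x ≥ t₁ + t₂. -/
open MeasureTheory Set ContinuousLinearMap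

noncomputable section

namespace WTS

/-- Lebesgue measure restricted to `ℝ₊ = [0, ∞)`. -/
def mu : Measure ℝ := volume.restrict (Set.Ici (0 : ℝ))

/-- The complex Hilbert space `L²(ℝ₊)`. -/
abbrev H : Type := Lp ℂ 2 mu

/-- A symbol: a function `φ` that is continuous and positive on `ℝ₊ = [0, ∞)`. -/
structure IsSymbol (φ : ℝ → ℝ) : Prop where
  cont : ContinuousOn φ (Set.Ici 0)
  pos : ∀ x ∈ Set.Ici (0 : ℝ), 0 < φ x

/-- The weight function `φ_t(x) = √(φ(x)/φ(x−t))` for `x ≥ t`, and `0` for `x < t`. -/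
def wt (φ : ℝ → ℝ) (t : ℝ) (x : ℝ) : ℝ :=
  if t ≤ x then Real.sqrt (φ x / φ (x - t)) else 0

/-- `S` is the weighted translation operator with symbol `φ` and translation `t`:
`(S f)(x) = φ_t(x) f(x−t)` for `x ≥ t` and `0` for `x < t`, where `φ_t` is essentially
bounded. -/
structure IsWT (φ : ℝ → ℝ) (t : ℝ) (S : H →L[ℂ] H) : Prop where
  bdd : ∃ C : ℝ, ∀ᵐ x ∂mu, wt φ t x ≤ C
  eval : ∀ f : H, ∀ᵐ x ∂mu,
    (S f : ℝ → ℂ) x = if t ≤ x then (wt φ t x : ℂ) * (f : ℝ → ℂ) (x - t) else 0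

/-- `φ_t` is essentially bounded below by a positive constant on `[t, ∞)`;
this is precisely left invertibility of the weighted translation operator. -/
def LowerBdd (φ : ℝ → ℝ) (t : ℝ) : Prop :=
  ∃ c : ℝ, 0 < c ∧ ∀ᵐ x ∂mu, t ≤ x → c ≤ wt φ t x

/-- `T` is the Cauchy dual of the weighted translation operator with symbol `φ` and
translation `t`: `(T f)(x) = φ_t(x)⁻¹ f(x−t)` for `x ≥ t` and `0` for `x < t`. -/
def IsWTDual (φ : ℝ → ℝ) (t : ℝ) (T : H →L[ℂ] H) : Prop :=
  ∀ f : H, ∀ᵐ x ∂mu,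
    (T f : ℝ → ℂ) x = if t ≤ x then ((wt φ t x : ℂ))⁻¹ * (f : ℝ → ℂ) (x - t) else 0

/-- The ordered product `S₁^{k₁} ⋯ S_d^{k_d}` of powers of a `d`-tuple of operators. -/
def tuplePow {d : ℕ} (S : Fin d → (H →L[ℂ] H)) (k : Fin d → ℕ) : H →L[ℂ] H :=
  (List.ofFn fun i => S i ^ k i).prod

/-- The joint kernel `E = ⋂ᵢ ker Sᵢ*` of the adjoint tuple. -/
def jointKer {d : ℕ} (S : Fin d → (H →L[ℂ] H)) : Set H :=
  {f : H | ∀ i, ContinuousLinearMap.adjoint (S i) f = 0}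

end WTS

/-!
Both `S₁ S₂` and `S₂ S₁` translate by `t₁ + t₂`, with the weights
`φ₁,t₁(x) φ₂,t₂(x - t₁)` and `φ₂,t₂(x) φ₁,t₁(x - t₂)` respectively. Testing against indicators
of bounded intervals shows that the operators agree iff these weights agree a.e. on
`[t₁ + t₂, ∞)`, hence everywhere there, as they are continuous. Squaring the weights gives
the identity between the symbols.
-/

namespace WTS

lemma ae_sub_of_ae {p : ℝ → Prop} (t : ℝ) (h : ∀ᵐ x ∂mu, p x) :
    ∀ᵐ x ∂mu, t ≤ x → p (x - t) := by
  rw [mu, ae_restrict_iff' measurableSet_Ici] at h ⊢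
  rw [ae_iff] at h ⊢
  refine measure_mono_null (fun x hx => ?_)
    (((measurePreserving_sub_right volume t).quasiMeasurePreserving).preimage_null h)
  simp only [mem_ofPred_eq, not_forall] at hx ⊢
  obtain ⟨-, hxt, hpx⟩ := hx
  exact ⟨by simpa using sub_nonneg.mpr hxt, hpx⟩

lemma IsWT.comp_apply_ae {φa φb : ℝ → ℝ} {ta tb : ℝ} (htb : 0 ≤ tb)
    {Sa Sb : H →L[ℂ] H} (hSa : IsWT φa ta Sa) (hSb : IsWT φb tb Sb) (f : H) :
    ∀ᵐ x ∂mu, (Sa (Sb f) : ℝ → ℂ) x =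
      if ta + tb ≤ x then
        ((wt φa ta x * wt φb tb (x - ta) : ℝ) : ℂ) * (f : ℝ → ℂ) (x - ta - tb)
      else 0 := by
  filter_upwards [hSa.eval (Sb f), ae_sub_of_ae ta (hSb.eval f)] with x hSax hSbx
  rw [hSax]
  by_cases hab : ta + tb ≤ x
  · have hxa : ta ≤ x := by linarith
    rw [if_pos hxa, hSbx hxa, if_pos (by linarith : tb ≤ x - ta), if_pos hab]
    push_cast
    ring
  · rw [if_neg hab]
    by_cases hxa : ta ≤ x
    · rw [if_pos hxa, hSbx hxa, if_neg fun h => hab (by linarith), mul_zero]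
    · rw [if_neg hxa]

lemma ae_eq_of_forall_mul_sub_eq {w₁ w₂ : ℝ → ℂ} {s : ℝ}
    (h : ∀ f : H, ∀ᵐ x ∂mu, s ≤ x → w₁ x * (f : ℝ → ℂ) (x - s) = w₂ x * (f : ℝ → ℂ) (x - s)) :
    ∀ᵐ x ∂mu, s ≤ x → w₁ x = w₂ x := by
  have h_strip : ∀ n : ℕ, ∀ᵐ x ∂mu, s ≤ x → x - s ≤ n → w₁ x = w₂ x := by
    intro n
    have hfin : mu (Icc (0 : ℝ) n) ≠ ⊤ := by
      rw [mu, Measure.restrict_apply measurableSet_Icc]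
      exact ((measure_mono inter_subset_left).trans_lt measure_Icc_lt_top).ne
    filter_upwards [h (indicatorConstLp 2 measurableSet_Icc hfin (1 : ℂ)),
      ae_sub_of_ae s (indicatorConstLp_coeFn (p := 2) (hs := measurableSet_Icc) (hμs := hfin)
        (c := (1 : ℂ)))] with x hx hind hsx hxn
    have hind_one := hind hsx
    rw [indicator_of_mem (show x - s ∈ Icc (0 : ℝ) n from ⟨sub_nonneg.mpr hsx, hxn⟩)] at hind_one
    simpa [hind_one] using hx hsx
  filter_upwards [ae_all_iff.mpr h_strip] with x hx hsx
  obtain ⟨n, hn⟩ := exists_nat_ge (x - s)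
  exact hx n hsx hn

theorem IsWT.mul_comm_iff_ae {φ₁ φ₂ : ℝ → ℝ} {t₁ t₂ : ℝ} (ht₁ : 0 ≤ t₁) (ht₂ : 0 ≤ t₂)
    {S₁ S₂ : H →L[ℂ] H} (hS₁ : IsWT φ₁ t₁ S₁) (hS₂ : IsWT φ₂ t₂ S₂) :
    S₁ * S₂ = S₂ * S₁ ↔ ∀ᵐ x ∂mu, t₁ + t₂ ≤ x →
      wt φ₁ t₁ x * wt φ₂ t₂ (x - t₁) = wt φ₂ t₂ x * wt φ₁ t₁ (x - t₂) := by
  have h_sub : ∀ x : ℝ, x - t₂ - t₁ = x - t₁ - t₂ := fun x => by ring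
  constructor
  · intro hcomm
    refine (ae_eq_of_forall_mul_sub_eq (w₁ := fun x => ((wt φ₁ t₁ x * wt φ₂ t₂ (x - t₁) : ℝ) : ℂ))
      (w₂ := fun x => ((wt φ₂ t₂ x * wt φ₁ t₁ (x - t₂) : ℝ) : ℂ)) fun f => ?_).mono
      fun x hx hsx => by exact_mod_cast hx hsx
    have hf : (S₁ (S₂ f) : ℝ → ℂ) =ᵐ[mu] S₂ (S₁ f) := by
      rw [← mul_apply_eq_comp, hcomm, mul_apply_eq_comp]
    filter_upwards [hf, hS₁.comp_apply_ae ht₂ hS₂ f, hS₂.comp_apply_ae ht₁ hS₁ f]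
      with x hx h₁₂ h₂₁ hsx
    rw [h₁₂, h₂₁, if_pos hsx, if_pos (by linarith), h_sub, sub_sub] at hx
    exact hx
  · intro hw
    ext f
    filter_upwards [hS₁.comp_apply_ae ht₂ hS₂ f, hS₂.comp_apply_ae ht₁ hS₁ f, hw]
      with x h₁₂ h₂₁ hwx
    rw [mul_apply_eq_comp, mul_apply_eq_comp, h₁₂, h₂₁, h_sub, add_comm t₂]
    split_ifs with hsx
    · rw [hwx hsx]
    · rfl

lemma IsSymbol.continuousOn_wt {φ : ℝ → ℝ} (hφ : IsSymbol φ) {t : ℝ} (ht : 0 ≤ t) :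
    ContinuousOn (wt φ t) (Ici t) := by
  have h_num : ContinuousOn φ (Ici t) := hφ.cont.mono (Ici_subset_Ici.mpr ht)
  have h_den : ContinuousOn (fun x => φ (x - t)) (Ici t) :=
    hφ.cont.comp (continuous_sub_right t).continuousOn
      (fun x hx => sub_nonneg.mpr (mem_Ici.mp hx))
  refine ContinuousOn.congr (f := fun x => Real.sqrt (φ x / φ (x - t))) ?_
    (fun x hx => if_pos (mem_Ici.mp hx))
  exact Real.continuous_sqrt.comp_continuousOn
    (h_num.div h_den fun x hx => (hφ.pos (x - t) (sub_nonneg.mpr (mem_Ici.mp hx))).ne')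

lemma continuousOn_wt_mul_wt_sub {φa φb : ℝ → ℝ} (hφa : IsSymbol φa) (hφb : IsSymbol φb)
    {ta tb : ℝ} (hta : 0 ≤ ta) (htb : 0 ≤ tb) :
    ContinuousOn (fun x => wt φa ta x * wt φb tb (x - ta)) (Ici (ta + tb)) :=
  ((hφa.continuousOn_wt hta).mono (Ici_subset_Ici.mpr (by linarith))).mul
    ((hφb.continuousOn_wt htb).comp (continuous_sub_right ta).continuousOn
      fun x hx => le_sub_iff_add_le'.mpr (mem_Ici.mp hx))

lemma ae_imp_iff_of_continuousOn {F G : ℝ → ℝ} {s : ℝ} (hs : 0 ≤ s)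
    (hF : ContinuousOn F (Ici s)) (hG : ContinuousOn G (Ici s)) :
    (∀ᵐ x ∂mu, s ≤ x → F x = G x) ↔ ∀ x, s ≤ x → F x = G x := by
  refine ⟨fun h x hx => ?_, fun h => ae_of_all _ h⟩
  have h_restrict : F =ᵐ[volume.restrict (Ici s)] G := by
    rw [mu, ae_restrict_iff' measurableSet_Ici] at h
    rw [Filter.EventuallyEq, ae_restrict_iff' measurableSet_Ici]
    exact h.mono fun x hx hsx => hx (hs.trans hsx) hsx
  refine Measure.eqOn_of_ae_eq h_restrict hF hG ?_ hx
  rw [interior_Ici, closure_Ioi]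

lemma wt_mul_wt_eq_iff {φ₁ φ₂ : ℝ → ℝ} (hφ₁ : IsSymbol φ₁) (hφ₂ : IsSymbol φ₂)
    {t₁ t₂ x : ℝ} (ht₁ : 0 ≤ t₁) (ht₂ : 0 ≤ t₂) (hx : t₁ + t₂ ≤ x) :
    wt φ₁ t₁ x * wt φ₂ t₂ (x - t₁) = wt φ₂ t₂ x * wt φ₁ t₁ (x - t₂) ↔
      φ₁ x * φ₂ (x - t₁) / (φ₁ (x - t₁) * φ₂ (x - t₁ - t₂)) =
        φ₂ x * φ₁ (x - t₂) / (φ₂ (x - t₂) * φ₁ (x - t₁ - t₂)) := by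
  have hpos : ∀ {φ : ℝ → ℝ}, IsSymbol φ → ∀ y ≤ t₁ + t₂, 0 < φ (x - y) :=
    fun hφ y hy => hφ.pos _ (by rw [mem_Ici]; linarith)
  have p₁ : 0 < φ₁ x := by simpa using hpos hφ₁ 0 (by linarith)
  have p₂ := hpos hφ₁ t₁ (by linarith)
  have p₃ := hpos hφ₁ t₂ (by linarith)
  have p₄ : 0 < φ₁ (x - t₁ - t₂) := by simpa [sub_sub] using hpos hφ₁ _ le_rfl
  have q₁ : 0 < φ₂ x := by simpa using hpos hφ₂ 0 (by linarith)
  have q₂ := hpos hφ₂ t₁ (by linarith)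
  have q₃ := hpos hφ₂ t₂ (by linarith)
  have q₄ : 0 < φ₂ (x - t₁ - t₂) := by simpa [sub_sub] using hpos hφ₂ _ le_rfl
  rw [wt, wt, wt, wt, if_pos (by linarith : t₁ ≤ x), if_pos (by linarith : t₂ ≤ x - t₁),
    if_pos (by linarith : t₂ ≤ x), if_pos (by linarith : t₁ ≤ x - t₂),
    ← Real.sqrt_mul (by positivity), ← Real.sqrt_mul (by positivity),
    div_mul_div_comm, div_mul_div_comm, sub_right_comm x t₂ t₁,
    Real.sqrt_inj (by positivity) (by positivity)]

/-- `S_{1,t₁}` and `S_{2,t₂}` commute iff the symbols satisfy the stated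
identity for all `x ≥ t₁ + t₂`. -/
theorem statement_0 (φ₁ φ₂ : ℝ → ℝ) (hφ₁ : IsSymbol φ₁) (hφ₂ : IsSymbol φ₂)
    (t₁ t₂ : ℝ) (ht₁ : 0 < t₁) (ht₂ : 0 < t₂)
    (S₁ S₂ : H →L[ℂ] H) (hS₁ : IsWT φ₁ t₁ S₁) (hS₂ : IsWT φ₂ t₂ S₂) :
    S₁ * S₂ = S₂ * S₁ ↔
      ∀ x : ℝ, t₁ + t₂ ≤ x →
        φ₁ x * φ₂ (x - t₁) / (φ₁ (x - t₁) * φ₂ (x - t₁ - t₂)) =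
        φ₂ x * φ₁ (x - t₂) / (φ₂ (x - t₂) * φ₁ (x - t₁ - t₂)) := by
  have hF := continuousOn_wt_mul_wt_sub hφ₁ hφ₂ ht₁.le ht₂.le
  have hG := continuousOn_wt_mul_wt_sub hφ₂ hφ₁ ht₂.le ht₁.le
  rw [add_comm t₂] at hG
  rw [hS₁.mul_comm_iff_ae ht₁.le ht₂.le hS₂, ae_imp_iff_of_continuousOn (by linarith) hF hG]
  exact forall₂_congr fun x hx => wt_mul_wt_eq_iff hφ₁ hφ₂ ht₁.le ht₂.le hx

end WTS
end
end

section
/- Let S_𝐭 = (S_{1,t₁},…,S_{d,t_d}) be a commuting d-tuple of weighted translation operators with t₁,…,t_d > 0, and let m = min{t₁,…,t_d}. Then the joint kernel E = ⋂_{i=1}^d ker S_{i,tᵢ}^* equals χ_{[0,m)}L²(ℝ₊), i.e. E = { f ∈ L²(ℝ₊) : f = 0 almost everywhere on [m, ∞) }. -/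
open MeasureTheory Set ContinuousLinearMap

noncomputable section

/-!
Translating by `t` identifies `mu` on `[t, ∞)` with `mu` itself, and under this change of variables
`S_t*` is multiplication of `f(· + t)` by `φ_t(· + t) = √(φ(· + t)/φ)`. This weight is positive on
`ℝ₊`, so `S_t* f = 0` exactly when `f` vanishes a.e. on `[t, ∞)`; intersecting these conditions over
`i` leaves the one for the smallest `tᵢ`.
-/

namespace WTS

section Shift

variable {t : ℝ}

lemma map_add_const_mu (t : ℝ) : mu.map (· + t) = volume.restrict (Ici t) := by
  conv_rhs => rw [← Measure.IsAddRightInvariant.map_add_right_eq_self (μ := volume) t]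
  rw [Measure.restrict_map (measurable_add_const t) measurableSet_Ici, mu]
  congr 1
  ext x
  simp

lemma measurableEmbedding_add_const (t : ℝ) : MeasurableEmbedding (· + t : ℝ → ℝ) :=
  (MeasurableEquiv.addRight t).measurableEmbedding

lemma mu_restrict_Ici (ht : 0 ≤ t) : mu.restrict (Ici t) = volume.restrict (Ici t) := by
  rw [mu, Measure.restrict_restrict measurableSet_Ici, Ici_inter_Ici, max_eq_left ht]

lemma ae_mu_nonneg : ∀ᵐ y ∂mu, 0 ≤ y :=
  ae_restrict_mem measurableSet_Ici

lemma ae_mu_le_imp_iff_ae_add (ht : 0 ≤ t) (P : ℝ → Prop) :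
    (∀ᵐ x ∂mu, t ≤ x → P x) ↔ ∀ᵐ y ∂mu, P (y + t) := by
  change (∀ᵐ x ∂mu, x ∈ Ici t → P x) ↔ _
  rw [← ae_restrict_iff' measurableSet_Ici, mu_restrict_Ici ht, ← map_add_const_mu,
    (measurableEmbedding_add_const t).ae_map_iff]

lemma ae_mu_add_of_ae (ht : 0 ≤ t) {P : ℝ → Prop} (h : ∀ᵐ x ∂mu, P x) :
    ∀ᵐ y ∂mu, P (y + t) :=
  (ae_mu_le_imp_iff_ae_add ht P).mp (h.mono fun _ hx _ => hx)

lemma memLp_comp_add_const {E : Type*} [NormedAddCommGroup E] {p : ENNReal} {g : ℝ → E}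
    (hg : MemLp g p mu) (ht : 0 ≤ t) : MemLp (fun y => g (y + t)) p mu := by
  have h : MemLp g p (volume.restrict (Ici t)) := by
    rw [← mu_restrict_Ici ht]
    exact hg.restrict _
  rwa [← map_add_const_mu, (measurableEmbedding_add_const t).memLp_map_measure_iff] at h

lemma setIntegral_Ici_mu {E : Type*} [NormedAddCommGroup E] [NormedSpace ℝ E] (ht : 0 ≤ t)
    (F : ℝ → E) : ∫ x in Ici t, F x ∂mu = ∫ y, F (y + t) ∂mu := by
  rw [mu_restrict_Ici ht, ← map_add_const_mu, (measurableEmbedding_add_const t).integral_map]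

end Shift

section WeightedTranslation

variable {φ : ℝ → ℝ} {t : ℝ} {S : H →L[ℂ] H}

lemma wt_add_of_nonneg {y : ℝ} (hy : 0 ≤ y) : wt φ t (y + t) = √(φ (y + t) / φ y) := by
  rw [wt, if_pos (by linarith), add_sub_cancel_right]

lemma IsSymbol.wt_add_pos (hφ : IsSymbol φ) (ht : 0 ≤ t) {y : ℝ} (hy : 0 ≤ y) :
    0 < wt φ t (y + t) := by
  rw [wt_add_of_nonneg hy]
  exact Real.sqrt_pos.mpr (div_pos (hφ.pos _ (by simp; linarith)) (hφ.pos y hy))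

lemma IsSymbol.continuousOn_wt_add (hφ : IsSymbol φ) (ht : 0 ≤ t) :
    ContinuousOn (fun y => wt φ t (y + t)) (Ici 0) := by
  refine ContinuousOn.congr ?_ fun y hy => wt_add_of_nonneg hy
  refine Real.continuous_sqrt.comp_continuousOn
    (ContinuousOn.div ?_ hφ.cont fun y hy => (hφ.pos y hy).ne')
  exact hφ.cont.comp (continuous_add_const t).continuousOn fun y hy => by simp at hy ⊢; linarith

lemma IsWT.memLp_adjoint (hφ : IsSymbol φ) (ht : 0 ≤ t) (hS : IsWT φ t S) (f : H) :
    MemLp (fun y => (wt φ t (y + t) : ℂ) * (f : ℝ → ℂ) (y + t)) 2 mu := by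
  have hf : MemLp (fun y => (f : ℝ → ℂ) (y + t)) 2 mu := memLp_comp_add_const (Lp.memLp f) ht
  have hw : AEStronglyMeasurable (fun y => (wt φ t (y + t) : ℂ)) mu :=
    Complex.continuous_ofReal.comp_aestronglyMeasurable
      ((hφ.continuousOn_wt_add ht).aestronglyMeasurable measurableSet_Ici)
  obtain ⟨C, hC⟩ := hS.bdd
  refine hf.of_le_mul (c := C) (hw.mul hf.aestronglyMeasurable) ?_
  filter_upwards [ae_mu_add_of_ae ht hC, ae_mu_nonneg] with y hCy hy
  rw [norm_mul, Complex.norm_real, Real.norm_of_nonneg (hφ.wt_add_pos ht hy).le]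
  exact mul_le_mul_of_nonneg_right hCy (norm_nonneg _)

lemma IsWT.inner_apply_left (ht : 0 ≤ t) (hS : IsWT φ t S) (h f : H) :
    inner ℂ (S h) f = ∫ y, starRingEnd ℂ ((h : ℝ → ℂ) y) *
      ((wt φ t (y + t) : ℂ) * (f : ℝ → ℂ) (y + t)) ∂mu := by
  calc inner ℂ (S h) f
      = ∫ x, (Ici t).indicator (fun x =>
          starRingEnd ℂ ((wt φ t x : ℂ) * (h : ℝ → ℂ) (x - t)) * (f : ℝ → ℂ) x) x ∂mu := by
        rw [L2.inner_def]
        refine integral_congr_ae ?_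
        filter_upwards [hS.eval h] with x hx
        rw [RCLike.inner_apply, hx, mul_comm]
        by_cases hxt : t ≤ x
        · rw [if_pos hxt, indicator_of_mem (mem_Ici.mpr hxt)]
        · rw [if_neg hxt, indicator_of_notMem (mt mem_Ici.mp hxt), map_zero, zero_mul]
    _ = ∫ y, starRingEnd ℂ ((wt φ t (y + t) : ℂ) * (h : ℝ → ℂ) y) *
          (f : ℝ → ℂ) (y + t) ∂mu := by
        rw [integral_indicator measurableSet_Ici, setIntegral_Ici_mu ht]
        simp only [add_sub_cancel_right]
    _ = _ := by
        congr 1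
        ext y
        rw [map_mul, Complex.conj_ofReal]
        ring

lemma IsWT.adjoint_apply_ae (hφ : IsSymbol φ) (ht : 0 ≤ t) (hS : IsWT φ t S) (f : H) :
    ⇑(adjoint S f) =ᵐ[mu] fun y => (wt φ t (y + t) : ℂ) * (f : ℝ → ℂ) (y + t) := by
  have hG := hS.memLp_adjoint hφ ht f
  suffices adjoint S f = hG.toLp _ from this ▸ hG.coeFn_toLp
  refine ext_inner_left ℂ fun h => ?_
  rw [adjoint_inner_right, hS.inner_apply_left ht, L2.inner_def]
  refine integral_congr_ae ?_
  filter_upwards [hG.coeFn_toLp] with y hy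
  rw [RCLike.inner_apply, hy, mul_comm]

lemma IsWT.adjoint_eq_zero_iff (hφ : IsSymbol φ) (ht : 0 ≤ t) (hS : IsWT φ t S) (f : H) :
    adjoint S f = 0 ↔ ∀ᵐ x ∂mu, t ≤ x → (f : ℝ → ℂ) x = 0 := by
  rw [Lp.eq_zero_iff_ae_eq_zero, ae_mu_le_imp_iff_ae_add ht]
  refine ⟨fun h0 => ?_, fun h0 => ?_⟩
  · filter_upwards [h0, hS.adjoint_apply_ae hφ ht f, ae_mu_nonneg] with y h0y hy hy0
    have hw : (wt φ t (y + t) : ℂ) ≠ 0 :=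
      Complex.ofReal_ne_zero.mpr (hφ.wt_add_pos ht hy0).ne'
    exact (mul_eq_zero.mp (hy ▸ h0y)).resolve_left hw
  · filter_upwards [h0, hS.adjoint_apply_ae hφ ht f] with y h0y hy
    rw [hy, h0y, mul_zero, Pi.zero_apply]

end WeightedTranslation

theorem statement_3_general {d : ℕ} (φ : Fin d → ℝ → ℝ) (t : Fin d → ℝ)
    (S : Fin d → (H →L[ℂ] H))
    (hφ : ∀ i, IsSymbol (φ i)) (ht : ∀ i, 0 < t i)
    (hS : ∀ i, IsWT (φ i) (t i) (S i))
    (m : ℝ) (hm : IsLeast (Set.range t) m) :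
    ∀ f : H, f ∈ jointKer S ↔ ∀ᵐ x ∂mu, m ≤ x → (f : ℝ → ℂ) x = 0 := by
  intro f
  have hker i := (hS i).adjoint_eq_zero_iff (hφ i) (ht i).le f
  obtain ⟨i₀, rfl⟩ := hm.1
  refine ⟨fun hf => (hker i₀).mp (hf i₀), fun hf i => (hker i).mpr ?_⟩
  filter_upwards [hf] with x hx hix
  exact hx ((hm.2 ⟨i, rfl⟩).trans hix)

/-- the joint kernel `E = ⋂ᵢ ker S_{i,tᵢ}*` equals
`χ_{[0,m)} L²(ℝ₊)` where `m = min{t₁, …, t_d}`. -/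
theorem statement_3 {d : ℕ} (φ : Fin d → ℝ → ℝ) (t : Fin d → ℝ)
    (S : Fin d → (H →L[ℂ] H))
    (hφ : ∀ i, IsSymbol (φ i)) (ht : ∀ i, 0 < t i)
    (hS : ∀ i, IsWT (φ i) (t i) (S i))
    (hcomm : ∀ i j, S i * S j = S j * S i)
    (m : ℝ) (hm : IsLeast (Set.range t) m) :
    ∀ f : H, f ∈ jointKer S ↔ ∀ᵐ x ∂mu, m ≤ x → (f : ℝ → ℂ) x = 0 :=
  statement_3_general φ t S hφ ht hS m hm

end WTS
end
end

section
/- Let S_𝐭 = (S_{1,t₁},…,S_{d,t_d}) be a commuting d-tuple of weighted translation operators with t₁,…,t_d > 0, let m = min{t₁,…,t_d}, and let E be the joint kernel of the adjoint tuple. Then for every k = (k₁,…,k_d) ∈ ℕ^d, S_{1,t₁}^{k₁}⋯S_{d,t_d}^{k_d} E ⊆ χ_{[k·t, k·t + m)} L²(ℝ₊), where k·t = k₁t₁ + ⋯ + k_d t_d; that is, every function in S_𝐭^k E vanishes almost everywhere outside the interval [k·t, k·t + m). -/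
open MeasureTheory Set ContinuousLinearMap

noncomputable section

/-!
A function `e` with `S_t^* e = 0` vanishes on `[t, ∞)`: for `h(y) = φ_t(y+t) e(y+t)` one has
`S_t h = φ_t² e`, so `0 = ⟪S_t h, e⟫ = ∫ φ_t² |e|²`, and `φ_t > 0` on `[t, ∞)`. Taking `t = m`,
every `e ∈ E` is supported in `[0, m)`, and each `S_{i,tᵢ}` only translates supports by `tᵢ`.
-/

namespace WTS

def VanishesOutside (f : H) (s : Set ℝ) : Prop :=
  ∀ᵐ x ∂mu, x ∉ s → (f : ℝ → ℂ) x = 0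

lemma measurePreserving_add_const (t : ℝ) :
    MeasurePreserving (· + t) mu (volume.restrict (Ici t)) := by
  have := (measurePreserving_add_right volume t).restrict_preimage (measurableSet_Ici (a := t))
  rwa [preimage_add_const_Ici, sub_self] at this

lemma measurePreserving_sub_const (t : ℝ) :
    MeasurePreserving (· - t) (volume.restrict (Ici t)) mu := by
  have := (measurePreserving_sub_right volume t).restrict_preimage (measurableSet_Ici (a := 0))
  rwa [preimage_sub_const_Ici, zero_add] at this

lemma restrict_Ici_le_mu {t : ℝ} (ht : 0 ≤ t) : volume.restrict (Ici t) ≤ mu :=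
  Measure.restrict_mono (Ici_subset_Ici.2 ht) le_rfl

lemma ae_add_const {t : ℝ} (ht : 0 ≤ t) {p : ℝ → Prop} (hp : ∀ᵐ x ∂mu, p x) :
    ∀ᵐ x ∂mu, p (x + t) :=
  (measurePreserving_add_const t).quasiMeasurePreserving.ae (ae_mono (restrict_Ici_le_mu ht) hp)

lemma ae_sub_const (t : ℝ) {p : ℝ → Prop} (hp : ∀ᵐ x ∂mu, p x) :
    ∀ᵐ x ∂mu, t ≤ x → p (x - t) := by
  have := (measurePreserving_sub_const t).quasiMeasurePreserving.ae hp
  rw [ae_restrict_iff' measurableSet_Ici] at this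
  exact ae_restrict_of_ae this

lemma wt_nonneg (φ : ℝ → ℝ) (t x : ℝ) : 0 ≤ wt φ t x := by
  unfold wt; split_ifs <;> positivity

section Weight

variable {φ : ℝ → ℝ} {t : ℝ}

lemma wt_of_lt {x : ℝ} (hx : x < t) : wt φ t x = 0 := if_neg (not_le.2 hx)

lemma IsSymbol.wt_pos (hφ : IsSymbol φ) (ht : 0 ≤ t) {x : ℝ} (hx : t ≤ x) : 0 < wt φ t x := by
  rw [wt, if_pos hx]
  exact Real.sqrt_pos.2 <| div_pos (hφ.pos x (mem_Ici.2 (ht.trans hx)))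
    (hφ.pos _ (mem_Ici.2 (sub_nonneg.2 hx)))

lemma IsSymbol.measurable_wt (hφ : IsSymbol φ) (ht : 0 ≤ t) : Measurable (wt φ t) := by
  classical
  have hsub : ContinuousOn (fun x => φ (x - t)) (Ici t) :=
    hφ.cont.comp (continuousOn_id.sub continuousOn_const)
      fun x hx => mem_Ici.2 (sub_nonneg.2 hx)
  have hcont : ContinuousOn (fun x => √(φ x / φ (x - t))) (Ici t) :=
    ((hφ.cont.mono (Ici_subset_Ici.2 ht)).div hsub
      fun x hx => (hφ.pos _ (mem_Ici.2 (sub_nonneg.2 hx))).ne').sqrt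
  convert hcont.measurable_piecewise (continuousOn_const (c := (0 : ℝ))) measurableSet_Ici
    using 1
  ext x
  simp [wt, Set.piecewise]

end Weight

section Support

variable {φ : ℝ → ℝ} {t : ℝ} {S : H →L[ℂ] H}

theorem IsWT.memLp_wt_mul_shift (hS : IsWT φ t S) (hφ : IsSymbol φ) (ht : 0 ≤ t) (g : H) :
    MemLp (fun y => (wt φ t (y + t) : ℂ) * g (y + t)) 2 mu := by
  obtain ⟨C, hC⟩ := hS.bdd
  have hg_shift := (Lp.memLp g).mono_measure (restrict_Ici_le_mu ht)
    |>.comp_measurePreserving (measurePreserving_add_const t)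
  refine hg_shift.of_le_mul (c := C) ?_ ?_
  · exact (Complex.measurable_ofReal.comp ((hφ.measurable_wt ht).comp
      (measurable_add_const t))).aestronglyMeasurable.mul hg_shift.1
  · filter_upwards [ae_add_const ht hC] with y hy
    simp only [Function.comp_apply, norm_mul, Complex.norm_real,
      Real.norm_of_nonneg (wt_nonneg φ t _)]
    gcongr

theorem IsWT.vanishesOutside_Ico_of_adjoint_apply_eq_zero (hS : IsWT φ t S)
    (hφ : IsSymbol φ) (ht : 0 ≤ t) {e : H} (he : adjoint S e = 0) :
    VanishesOutside e (Ico 0 t) := by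
  have hh := hS.memLp_wt_mul_shift hφ ht e
  set f : H := hh.toLp _
  have hSf : ∀ᵐ x ∂mu, (S f : ℝ → ℂ) x = (wt φ t x ^ 2 : ℂ) * e x := by
    filter_upwards [hS.eval f, ae_sub_const t hh.coeFn_toLp] with x hSx hfx
    rw [hSx]
    split_ifs with hx
    · rw [hfx hx, sub_add_cancel]
      ring
    · simp [wt_of_lt (not_le.1 hx)]
  set F : ℝ → ℝ := fun x => (wt φ t x * ‖e x‖) ^ 2
  have hinner : ∀ᵐ x ∂mu, inner ℂ ((S f : ℝ → ℂ) x) (e x) = (F x : ℂ) := by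
    filter_upwards [hSf] with x hx
    rw [hx, RCLike.inner_apply, map_mul, map_pow, Complex.conj_ofReal, mul_left_comm,
      Complex.mul_conj']
    simp only [F]
    push_cast
    ring
  have hint : ∫ x, F x ∂mu = 0 := by
    have h0 : inner ℂ (S f) e = 0 := by
      rw [← adjoint_inner_right, he, inner_zero_right]
    rw [L2.inner_def, integral_congr_ae hinner] at h0
    exact Complex.ofReal_eq_zero.1 (integral_ofReal.symm.trans h0)
  have hintegrable : Integrable F mu := by
    simpa only [RCLike.re_to_complex, Complex.ofReal_re] using
      ((L2.integrable_inner (𝕜 := ℂ) (S f) e).congr hinner).re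
  have hzero := (integral_eq_zero_iff_of_nonneg (fun x => sq_nonneg _) hintegrable).1 hint
  filter_upwards [hzero, ae_restrict_mem (μ := volume) measurableSet_Ici] with x hx hx0 hxI
  have hwx := hφ.wt_pos ht (not_lt.1 fun hxt => hxI ⟨hx0, hxt⟩)
  simpa [F, hwx.ne'] using hx

theorem IsWT.vanishesOutside_apply (hS : IsWT φ t S) {f : H} {a b : ℝ}
    (hf : VanishesOutside f (Ico a b)) : VanishesOutside (S f) (Ico (a + t) (b + t)) := by
  filter_upwards [hS.eval f, ae_sub_const t hf] with x hSx hfx hx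
  rw [hSx]
  split_ifs with hxt
  · rw [hfx hxt fun h => hx (by rwa [← preimage_sub_const_Ico]), mul_zero]
  · rfl

theorem IsWT.vanishesOutside_pow_apply (hS : IsWT φ t S) (n : ℕ) {f : H} {a b : ℝ}
    (hf : VanishesOutside f (Ico a b)) :
    VanishesOutside ((S ^ n) f) (Ico (a + n * t) (b + n * t)) := by
  induction n with
  | zero => simpa using hf
  | succ n ih =>
    rw [pow_succ', mul_apply_eq_comp]
    convert hS.vanishesOutside_apply ih using 2 <;> push_cast <;> ring

end Support

lemma tuplePow_succ {d : ℕ} (S : Fin (d + 1) → (H →L[ℂ] H)) (k : Fin (d + 1) → ℕ) :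
    tuplePow S k = S 0 ^ k 0 * tuplePow (fun i => S i.succ) (fun i => k i.succ) := by
  rw [tuplePow, List.ofFn_succ, List.prod_cons, tuplePow]

theorem vanishesOutside_tuplePow_apply {d : ℕ} {φ : Fin d → ℝ → ℝ} {t : Fin d → ℝ}
    {S : Fin d → (H →L[ℂ] H)} (hS : ∀ i, IsWT (φ i) (t i) (S i)) (k : Fin d → ℕ) {f : H}
    {a b : ℝ} (hf : VanishesOutside f (Ico a b)) :
    VanishesOutside (tuplePow S k f)
      (Ico (a + ∑ i, (k i : ℝ) * t i) (b + ∑ i, (k i : ℝ) * t i)) := by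
  induction d generalizing a b with
  | zero => simpa [tuplePow] using hf
  | succ d ih =>
    have := (hS 0).vanishesOutside_pow_apply (k 0)
      (ih (fun i => hS i.succ) (fun i => k i.succ) hf)
    rw [tuplePow_succ, mul_apply_eq_comp, Fin.sum_univ_succ]
    convert this using 2 <;> ring

theorem statement_6_general {d : ℕ} (φ : Fin d → ℝ → ℝ) (t : Fin d → ℝ)
    (S : Fin d → (H →L[ℂ] H))
    (hφ : ∀ i, IsSymbol (φ i)) (ht : ∀ i, 0 < t i)
    (hS : ∀ i, IsWT (φ i) (t i) (S i))
    (m : ℝ) (hm : IsLeast (Set.range t) m) :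
    ∀ (k : Fin d → ℕ), ∀ e ∈ jointKer S, ∀ᵐ x ∂mu,
      (x < ∑ i, (k i : ℝ) * t i ∨ (∑ i, (k i : ℝ) * t i) + m ≤ x) →
      (tuplePow S k e : ℝ → ℂ) x = 0 := by
  intro k e he
  obtain ⟨i₀, rfl⟩ := hm.1
  have he_supp : VanishesOutside e (Ico 0 (t i₀)) :=
    (hS i₀).vanishesOutside_Ico_of_adjoint_apply_eq_zero (hφ i₀) (ht i₀).le (he i₀)
  filter_upwards [vanishesOutside_tuplePow_apply hS k he_supp] with x hx hxk
  refine hx fun ⟨hlo, hhi⟩ => ?_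
  rcases hxk with hxk | hxk <;> linarith

/-- for every `k ∈ ℕ^d`, `S_𝐭^k E ⊆ χ_{[k·t, k·t + m)} L²(ℝ₊)`, where
`m = min{t₁, …, t_d}` and `E` is the joint kernel of the adjoint tuple. -/
theorem statement_6 {d : ℕ} (φ : Fin d → ℝ → ℝ) (t : Fin d → ℝ)
    (S : Fin d → (H →L[ℂ] H))
    (hφ : ∀ i, IsSymbol (φ i)) (ht : ∀ i, 0 < t i)
    (hS : ∀ i, IsWT (φ i) (t i) (S i))
    (hcomm : ∀ i j, S i * S j = S j * S i)
    (m : ℝ) (hm : IsLeast (Set.range t) m) :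
    ∀ (k : Fin d → ℕ), ∀ e ∈ jointKer S, ∀ᵐ x ∂mu,
      (x < ∑ i, (k i : ℝ) * t i ∨ (∑ i, (k i : ℝ) * t i) + m ≤ x) →
      (tuplePow S k e : ℝ → ℂ) x = 0 :=
  statement_6_general φ t S hφ ht hS m hm

end WTS
end
end

section
/- Let (S_{1,t₁},…,S_{d,t_d}) be a d-tuple of left invertible weighted translation operators with t₁,…,t_d > 0, and let S_{i,tᵢ}' denote the Cauchy dual of S_{i,tᵢ}. Then for each pair of indices i, j, the operators S_{i,tᵢ}' and S_{j,t_j}' commute if and only if S_{i,tᵢ} and S_{j,t_j} commute; in particular the toral Cauchy dual d-tuple (S_{1,t₁}',…,S_{d,t_d}') is commuting if and only if the d-tuple (S_{1,t₁},…,S_{d,t_d}) is commuting. -/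
open MeasureTheory Set ContinuousLinearMap

noncomputable section

/-!
Every operator in sight acts as `f ↦ w · f(· - s)` on `[s, ∞)` and as zero below `s`, and a
product of two such operators is again of this form, with translation `tᵢ + tⱼ` and the product
of the (shifted) weights. Since such an operator determines its weight a.e. on `[s, ∞)` (test it
on indicators of `[0, n]`), `Sᵢ Sⱼ = Sⱼ Sᵢ` is the a.e. identity
`φᵢ,ₜᵢ(x) φⱼ,ₜⱼ(x - tᵢ) = φⱼ,ₜⱼ(x) φᵢ,ₜᵢ(x - tⱼ)`, and for the Cauchy duals it is the same identity
with every weight inverted.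
-/

namespace WTS

def IsWeightedShift (a : ℝ) (u : ℝ → ℂ) (T : H →L[ℂ] H) : Prop :=
  ∀ f : H, ∀ᵐ x ∂mu, (T f : ℝ → ℂ) x = if a ≤ x then u x * (f : ℝ → ℂ) (x - a) else 0

lemma IsWT.isWeightedShift {φ : ℝ → ℝ} {t : ℝ} {S : H →L[ℂ] H} (hS : IsWT φ t S) :
    IsWeightedShift t (fun x => (wt φ t x : ℂ)) S :=
  hS.eval

lemma IsWTDual.isWeightedShift {φ : ℝ → ℝ} {t : ℝ} {T : H →L[ℂ] H} (hT : IsWTDual φ t T) :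
    IsWeightedShift t (fun x => ((wt φ t x : ℂ))⁻¹) T :=
  hT

lemma ae_mu_sub_of_ae {p : ℝ → Prop} (hp : ∀ᵐ y ∂mu, p y) (c : ℝ) :
    ∀ᵐ x ∂mu, c ≤ x → p (x - c) := by
  have hvol : ∀ᵐ y, y ∈ Ici (0 : ℝ) → p y := (ae_restrict_iff' measurableSet_Ici).mp hp
  have hsub : ∀ᵐ x, x - c ∈ Ici (0 : ℝ) → p (x - c) :=
    (measurePreserving_sub_right volume c).quasiMeasurePreserving.ae hvol
  refine ae_mono Measure.restrict_le_self ?_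
  filter_upwards [hsub] with x hx hcx
  exact hx (by simp only [mem_Ici]; linarith)

namespace IsWeightedShift

variable {a b : ℝ} {u v : ℝ → ℂ} {A B : H →L[ℂ] H}

lemma mul (hb : 0 ≤ b) (hA : IsWeightedShift a u A) (hB : IsWeightedShift b v B) :
    IsWeightedShift (a + b) (fun x => u x * v (x - a)) (A * B) := by
  intro f
  filter_upwards [hA (B f), ae_mu_sub_of_ae (hB f) a] with x hAx hBx
  change (A (B f) : ℝ → ℂ) x = _
  rw [hAx]
  by_cases hax : a ≤ x
  · rw [if_pos hax, hBx hax, sub_sub, mul_ite, mul_zero, ← mul_assoc]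
    exact if_congr ⟨fun h => by linarith, fun h => by linarith⟩ rfl rfl
  · rw [if_neg hax, if_neg (by linarith)]

lemma weight_unique (hA : IsWeightedShift a u A) (hB : IsWeightedShift a v A) :
    ∀ᵐ x ∂mu, a ≤ x → u x = v x := by
  have hbounded : ∀ n : ℕ, ∀ᵐ x ∂mu, a ≤ x → x ≤ n + a → u x = v x := by
    intro n
    have hfin : mu (Icc (0 : ℝ) n) ≠ ⊤ :=
      ((Measure.restrict_le_self _).trans_lt measure_Icc_lt_top).ne
    set f : H := indicatorConstLp 2 measurableSet_Icc hfin (1 : ℂ)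
    have hf : ∀ᵐ y ∂mu, (f : ℝ → ℂ) y = (Icc (0 : ℝ) n).indicator (fun _ => 1) y :=
      indicatorConstLp_coeFn
    filter_upwards [hA f, hB f, ae_mu_sub_of_ae hf a] with x hAx hBx hfx hax hxn
    have hf1 : (f : ℝ → ℂ) (x - a) = 1 := by
      have hmem : x - a ∈ Icc (0 : ℝ) n := ⟨by linarith, by linarith⟩
      rw [hfx hax, indicator_of_mem hmem]
    rw [if_pos hax, hf1, mul_one] at hAx hBx
    rw [← hAx, ← hBx]
  filter_upwards [ae_all_iff.mpr hbounded] with x hx hax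
  exact hx ⌈x - a⌉₊ hax (by linarith [Nat.le_ceil (x - a)])

lemma eq_iff (hA : IsWeightedShift a u A) (hB : IsWeightedShift a v B) :
    A = B ↔ ∀ᵐ x ∂mu, a ≤ x → u x = v x := by
  refine ⟨fun hAB => weight_unique hA (hAB ▸ hB), fun huv => ?_⟩
  ext f
  filter_upwards [hA f, hB f, huv] with x hAx hBx hx
  rw [hAx, hBx]
  split_ifs with hax
  · rw [hx hax]
  · rfl

lemma mul_eq_mul_iff (ha : 0 ≤ a) (hb : 0 ≤ b) (hA : IsWeightedShift a u A)
    (hB : IsWeightedShift b v B) :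
    A * B = B * A ↔ ∀ᵐ x ∂mu, a + b ≤ x → u x * v (x - a) = v x * u (x - b) := by
  have hBA := hB.mul ha hA
  rw [add_comm b a] at hBA
  exact eq_iff (hA.mul hb hB) hBA

end IsWeightedShift

theorem statement_12_general {d : ℕ} (φ : Fin d → ℝ → ℝ) (t : Fin d → ℝ)
    (S S' : Fin d → (H →L[ℂ] H))
    (ht : ∀ i, 0 < t i)
    (hS : ∀ i, IsWT (φ i) (t i) (S i))
    (hS' : ∀ i, IsWTDual (φ i) (t i) (S' i)) :
    (∀ i j, (S' i * S' j = S' j * S' i ↔ S i * S j = S j * S i)) ∧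
    ((∀ i j, S' i * S' j = S' j * S' i) ↔ (∀ i j, S i * S j = S j * S i)) := by
  have hpair : ∀ i j, (S' i * S' j = S' j * S' i ↔ S i * S j = S j * S i) := by
    intro i j
    rw [IsWeightedShift.mul_eq_mul_iff (ht i).le (ht j).le (hS' i).isWeightedShift
        (hS' j).isWeightedShift,
      IsWeightedShift.mul_eq_mul_iff (ht i).le (ht j).le (hS i).isWeightedShift
        (hS j).isWeightedShift]
    simp only [← mul_inv, inv_inj]
  exact ⟨hpair, forall₂_congr hpair⟩

/-- the Cauchy duals `S_{i,tᵢ}'` and `S_{j,t_j}'` commute iff `S_{i,tᵢ}` and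
`S_{j,t_j}` commute; in particular the toral Cauchy dual tuple is commuting iff the
original tuple is commuting. -/
theorem statement_12 {d : ℕ} (φ : Fin d → ℝ → ℝ) (t : Fin d → ℝ)
    (S S' : Fin d → (H →L[ℂ] H))
    (hφ : ∀ i, IsSymbol (φ i)) (ht : ∀ i, 0 < t i)
    (hS : ∀ i, IsWT (φ i) (t i) (S i))
    (hlb : ∀ i, LowerBdd (φ i) (t i))
    (hS' : ∀ i, IsWTDual (φ i) (t i) (S' i)) :
    (∀ i j, (S' i * S' j = S' j * S' i ↔ S i * S j = S j * S i)) ∧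
    ((∀ i j, S' i * S' j = S' j * S' i) ↔ (∀ i j, S i * S j = S j * S i)) :=
  statement_12_general φ t S S' ht hS hS'

end WTS
end
end
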